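/- Lie-ification of an associative 2-algebra yields a differential crossed module of Lie algebras: given an associative 2-algebra t : G₋₁ → G₀, equip G₀ with the commutator bracket [x,x'] = x·x' − x'·x, G₋₁ with the commutator bracket [y,y'] = y·y' − y'·y, and define the action x ▹ y := x ▷ y − y ◁ x. Then t is a Lie algebra homomorphism, x ↦ (x ▹ −) is an action by derivations satisfying [x,x'] ▹ y = x ▹ (x' ▹ y) − x' ▹ (x ▹ y), and the Lie equivariance t(x ▹ y) = [x, t(y)] and Lie–Peiffer identity t(y) ▹ y' = [y, y'] hold. -/

import Mathlib

structure AssocTwoAlgebra (k : Type*) [CommRing k] (G₀ G₁ : Type*)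
    [NonUnitalRing G₀] [NonUnitalRing G₁] [Module k G₀] [Module k G₁] where
  t : G₁ →ₗ[k] G₀
  t_mul : ∀ y y' : G₁, t (y * y') = t y * t y'
  actL : G₀ →ₗ[k] G₁ →ₗ[k] G₁
  actR : G₁ →ₗ[k] G₀ →ₗ[k] G₁
  actL_mul : ∀ (x x' : G₀) (y : G₁), actL (x * x') y = actL x (actL x' y)
  actLR : ∀ (x : G₀) (y : G₁) (x' : G₀), actR (actL x y) x' = actL x (actR y x')
  actR_mul : ∀ (y : G₁) (x x' : G₀), actR y (x * x') = actR (actR y x) x'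
  equivL : ∀ (x : G₀) (y : G₁), t (actL x y) = x * t y
  equivR : ∀ (y : G₁) (x : G₀), t (actR y x) = t y * x
  peifferL : ∀ y y' : G₁, actL (t y) y' = y * y'
  peifferR : ∀ y y' : G₁, actR y (t y') = y * y'

/-!
The Peiffer identities turn the product `y * y'` in `G₁` into the actions `t y ▷ y'` and
`y ◁ t y'`, so together with equivariance of `t` they make `▷` and `◁` compatible with that
product: `x ▷ (y * y') = (x ▷ y) * y'`, `(y * y') ◁ x = y * (y' ◁ x)` and
`(y ◁ x) * y' = y * (x ▷ y')`. All Lie identities are then commutator expansions of these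
and of the bimodule axioms.
-/

namespace AssocTwoAlgebra

variable {k G₀ G₁ : Type*} [CommRing k] [NonUnitalRing G₀] [NonUnitalRing G₁]
  [Module k G₀] [Module k G₁] (A : AssocTwoAlgebra k G₀ G₁)

def lieAct (x : G₀) (y : G₁) : G₁ := A.actL x y - A.actR y x

theorem actL_mul_right (x : G₀) (y y' : G₁) : A.actL x (y * y') = A.actL x y * y' := by
  rw [← A.peifferL y y', ← A.actL_mul, ← A.equivL, A.peifferL]

theorem actR_mul_left (x : G₀) (y y' : G₁) : A.actR (y * y') x = y * A.actR y' x := by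
  rw [← A.peifferR y y', ← A.actR_mul, ← A.equivR, A.peifferR]

theorem actR_mul_eq_mul_actL (x : G₀) (y y' : G₁) : A.actR y x * y' = y * A.actL x y' := by
  rw [← A.peifferL (A.actR y x) y', A.equivR, A.actL_mul, A.peifferL]

theorem t_commutator (y y' : G₁) : A.t (y * y' - y' * y) = A.t y * A.t y' - A.t y' * A.t y := by
  rw [map_sub, A.t_mul, A.t_mul]

theorem lieAct_commutator (x x' : G₀) (y : G₁) :
    A.lieAct (x * x' - x' * x) y = A.lieAct x (A.lieAct x' y) - A.lieAct x' (A.lieAct x y) := by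
  simp only [lieAct, map_sub, LinearMap.sub_apply, A.actL_mul, A.actR_mul, A.actLR]
  abel

theorem lieAct_mul_sub_mul (x : G₀) (y y' : G₁) :
    A.lieAct x (y * y' - y' * y)
      = (A.lieAct x y * y' - y' * A.lieAct x y) + (y * A.lieAct x y' - A.lieAct x y' * y) := by
  simp only [lieAct, map_sub, LinearMap.sub_apply, sub_mul, mul_sub, A.actL_mul_right,
    A.actR_mul_left, A.actR_mul_eq_mul_actL]
  abel

theorem t_lieAct (x : G₀) (y : G₁) : A.t (A.lieAct x y) = x * A.t y - A.t y * x := by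
  rw [lieAct, map_sub, A.equivL, A.equivR]

theorem lieAct_t (y y' : G₁) : A.lieAct (A.t y) y' = y * y' - y' * y := by
  rw [lieAct, A.peifferL, A.peifferR]

end AssocTwoAlgebra

theorem lieification {k G₀ G₁ : Type*} [CommRing k]
    [NonUnitalRing G₀] [NonUnitalRing G₁] [Module k G₀] [Module k G₁]
    (A : AssocTwoAlgebra k G₀ G₁) :
    -- t is a Lie algebra homomorphism for the commutator brackets
    (∀ y y' : G₁, A.t (y * y' - y' * y) = A.t y * A.t y' - A.t y' * A.t y) ∧
    -- Lie-algebra action: [x,x'] ▹ y = x ▹ (x' ▹ y) − x' ▹ (x ▹ y)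
    (∀ (x x' : G₀) (y : G₁),
      A.actL (x * x' - x' * x) y - A.actR y (x * x' - x' * x)
        = (A.actL x (A.actL x' y - A.actR y x') - A.actR (A.actL x' y - A.actR y x') x)
          - (A.actL x' (A.actL x y - A.actR y x) - A.actR (A.actL x y - A.actR y x) x')) ∧
    -- the action is by derivations of the commutator bracket on G₁
    (∀ (x : G₀) (y y' : G₁),
      A.actL x (y * y' - y' * y) - A.actR (y * y' - y' * y) x
        = ((A.actL x y - A.actR y x) * y' - y' * (A.actL x y - A.actR y x))
          + (y * (A.actL x y' - A.actR y' x) - (A.actL x y' - A.actR y' x) * y)) ∧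
    -- Lie equivariance: t(x ▹ y) = [x, t y]
    (∀ (x : G₀) (y : G₁), A.t (A.actL x y - A.actR y x) = x * A.t y - A.t y * x) ∧
    -- Lie–Peiffer identity: t(y) ▹ y' = [y, y']
    (∀ y y' : G₁, A.actL (A.t y) y' - A.actR y' (A.t y) = y * y' - y' * y) :=
  ⟨A.t_commutator, A.lieAct_commutator, A.lieAct_mul_sub_mul, A.t_lieAct, A.lieAct_t⟩
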